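/- arXiv:2102.12512 — 5 statements merged into one kernel-verified Lean document; each statement's English description precedes it below -/
import Mathlib

section
/- For density matrices ρ₀, ρ₁ and any quantum channel (completely positive trace-preserving map) E, one has Q_min(E(ρ₀), E(ρ₁)) ≥ Q_min(ρ₀, ρ₁), where Q_min(ρ₀,ρ₁) = 2·min{ Tr(Λρ₀) : 0 ≤ Λ ≤ I, Tr(Λ(ρ₀+ρ₁)) = 1 }. Equivalently, ξ_min(ρ₀,ρ₁) := −log Q_min(ρ₀,ρ₁) satisfies the data-processing inequality ξ_min(E(ρ₀),E(ρ₁)) ≤ ξ_min(ρ₀,ρ₁). -/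
/-!
The adjoint `E*(Λ) = ∑ i, Kᵢᴴ Λ Kᵢ` of the channel is positive and unital, and
`Tr(E*(Λ) ρ) = Tr(Λ E(ρ))`. Hence it maps every test `Λ` admissible for `(E ρ₀, E ρ₁)` to a test
admissible for `(ρ₀, ρ₁)` with the same value, so `Q_min(ρ₀, ρ₁)` is an infimum over a larger set.
For the comparison of the two `sInf`s to be legitimate, the larger set is bounded below by `0`
(`Tr(Λ ρ₀) ≥ 0`), and the smaller one is nonempty: `Λ = 1/2` is admissible since `E` preserves
traces.
-/

open Matrix
open scoped ComplexOrder

/-- `Q_min(ρ₀,ρ₁) = 2·min{ Tr(Λρ₀) : 0 ≤ Λ ≤ I, Tr(Λ(ρ₀+ρ₁)) = 1 }`. -/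
noncomputable def Qmin {d : ℕ} (ρ₀ ρ₁ : Matrix (Fin d) (Fin d) ℂ) : ℝ :=
  sInf {x : ℝ | ∃ Λ : Matrix (Fin d) (Fin d) ℂ, Λ.PosSemidef ∧ (1 - Λ).PosSemidef ∧
    (Λ * (ρ₀ + ρ₁)).trace = 1 ∧ x = 2 * ((Λ * ρ₀).trace).re}

namespace Matrix

open scoped MatrixOrder in
theorem PosSemidef.trace_mul_nonneg {n 𝕜 : Type*} [Fintype n] [RCLike 𝕜] {A B : Matrix n n 𝕜}
    (hA : A.PosSemidef) (hB : B.PosSemidef) : 0 ≤ (A * B).trace := by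
  classical
  set S := CFC.sqrt B
  have hS : Sᴴ = S := (CFC.sqrt_nonneg B).posSemidef.isHermitian.eq
  have hSS : S * S = B := by rw [← sq, CFC.sq_sqrt B hB.nonneg]
  have : (A * B).trace = (Sᴴ * A * S).trace := by
    rw [hS, ← hSS, ← Matrix.mul_assoc, trace_mul_cycle]
  exact this ▸ (hA.conjTranspose_mul_mul_same S).trace_nonneg

section Kraus

variable {ι m n R : Type*} [Fintype ι]

section CommSemiring

variable [CommSemiring R] [StarRing R] (K : ι → Matrix m n R)

@[simps]
def krausMap [Fintype n] : Matrix n n R →ₗ[R] Matrix m m R where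
  toFun ρ := ∑ i, K i * ρ * (K i)ᴴ
  map_add' ρ σ := by simp only [Matrix.mul_add, Matrix.add_mul, Finset.sum_add_distrib]
  map_smul' c ρ := by
    simp only [Matrix.mul_smul, Matrix.smul_mul, Finset.smul_sum, RingHom.id_apply]

@[simps]
def krausMapAdjoint [Fintype m] : Matrix m m R →ₗ[R] Matrix n n R where
  toFun Λ := ∑ i, (K i)ᴴ * Λ * K i
  map_add' Λ Θ := by simp only [Matrix.mul_add, Matrix.add_mul, Finset.sum_add_distrib]
  map_smul' c Λ := by
    simp only [Matrix.mul_smul, Matrix.smul_mul, Finset.smul_sum, RingHom.id_apply]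

theorem trace_krausMapAdjoint_mul [Fintype m] [Fintype n] (Λ : Matrix m m R) (ρ : Matrix n n R) :
    (krausMapAdjoint K Λ * ρ).trace = (Λ * krausMap K ρ).trace := by
  simp only [krausMapAdjoint_apply, krausMap_apply, Matrix.sum_mul, Matrix.mul_sum, trace_sum]
  refine Finset.sum_congr rfl fun i _ => ?_
  simp only [Matrix.mul_assoc]
  rw [trace_mul_comm (K i)ᴴ]
  simp only [Matrix.mul_assoc]

variable {K} [Fintype m] [DecidableEq m] [DecidableEq n]

theorem krausMapAdjoint_one (hK : ∑ i, (K i)ᴴ * K i = 1) : krausMapAdjoint K 1 = 1 := by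
  simpa only [krausMapAdjoint_apply, Matrix.mul_one] using hK

theorem trace_krausMap [Fintype n] (hK : ∑ i, (K i)ᴴ * K i = 1) (ρ : Matrix n n R) :
    (krausMap K ρ).trace = ρ.trace := by
  simpa only [krausMapAdjoint_one hK, Matrix.one_mul] using (trace_krausMapAdjoint_mul K 1 ρ).symm

end CommSemiring

variable [CommRing R] [PartialOrder R] [StarRing R] [StarOrderedRing R] {K : ι → Matrix m n R}
  [Fintype m] [Fintype n]

theorem PosSemidef.krausMap {ρ : Matrix n n R} (hρ : ρ.PosSemidef) :
    (krausMap K ρ).PosSemidef :=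
  posSemidef_sum _ fun i _ => hρ.mul_mul_conjTranspose_same (K i)

theorem PosSemidef.krausMapAdjoint {Λ : Matrix m m R} (hΛ : Λ.PosSemidef) :
    (krausMapAdjoint K Λ).PosSemidef :=
  posSemidef_sum _ fun i _ => hΛ.conjTranspose_mul_mul_same (K i)

end Kraus

end Matrix

open Matrix

section QminTests

variable {n : Type*} [Fintype n] [DecidableEq n]

def qminTests (ρ₀ ρ₁ : Matrix n n ℂ) : Set (Matrix n n ℂ) :=
  {Λ | Λ.PosSemidef ∧ (1 - Λ).PosSemidef ∧ (Λ * (ρ₀ + ρ₁)).trace = 1}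

theorem Qmin_eq_sInf_image {d : ℕ} (ρ₀ ρ₁ : Matrix (Fin d) (Fin d) ℂ) :
    Qmin ρ₀ ρ₁ = sInf ((fun Λ => 2 * (Λ * ρ₀).trace.re) '' qminTests ρ₀ ρ₁) := by
  unfold Qmin
  congr 1
  ext x
  constructor
  · rintro ⟨Λ, hΛ, h1Λ, htr, rfl⟩
    exact ⟨Λ, ⟨hΛ, h1Λ, htr⟩, rfl⟩
  · rintro ⟨Λ, ⟨hΛ, h1Λ, htr⟩, rfl⟩
    exact ⟨Λ, hΛ, h1Λ, htr, rfl⟩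

theorem half_smul_one_mem_qminTests {ρ₀ ρ₁ : Matrix n n ℂ} (h : (ρ₀ + ρ₁).trace = 2) :
    (2⁻¹ : ℂ) • 1 ∈ qminTests ρ₀ ρ₁ := by
  have hpsd : ((2⁻¹ : ℂ) • 1 : Matrix n n ℂ).PosSemidef :=
    PosSemidef.one.smul (inv_nonneg.2 zero_le_two)
  refine ⟨hpsd, ?_, ?_⟩
  · convert hpsd using 1
    rw [sub_eq_iff_eq_add, ← add_smul]
    norm_num
  · rw [smul_mul_assoc, Matrix.one_mul, trace_smul, h]
    norm_num

theorem krausMapAdjoint_mapsTo_qminTests {ι m : Type*} [Fintype ι] [Fintype m] [DecidableEq m]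
    {K : ι → Matrix m n ℂ} (hK : ∑ i, (K i)ᴴ * K i = 1) (ρ₀ ρ₁ : Matrix n n ℂ) :
    Set.MapsTo (krausMapAdjoint K) (qminTests (krausMap K ρ₀) (krausMap K ρ₁))
      (qminTests ρ₀ ρ₁) := by
  rintro Λ ⟨hΛ, h1Λ, htr⟩
  refine ⟨hΛ.krausMapAdjoint, ?_, ?_⟩
  · rw [← krausMapAdjoint_one hK, ← map_sub]
    exact h1Λ.krausMapAdjoint
  · rwa [trace_krausMapAdjoint_mul, map_add]

end QminTests

theorem Qmin_dpi_general {d m : ℕ} (ρ₀ ρ₁ : Matrix (Fin d) (Fin d) ℂ)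
    (h₀ : ρ₀.PosSemidef) (h₀t : ρ₀.trace = 1)
    (h₁t : ρ₁.trace = 1)
    {ι : Type} [Fintype ι] (K : ι → Matrix (Fin m) (Fin d) ℂ)
    (hK : ∑ i, (K i)ᴴ * K i = 1) :
    Qmin ρ₀ ρ₁ ≤ Qmin (∑ i, K i * ρ₀ * (K i)ᴴ) (∑ i, K i * ρ₁ * (K i)ᴴ) := by
  change Qmin ρ₀ ρ₁ ≤ Qmin (krausMap K ρ₀) (krausMap K ρ₁)
  have htr : (krausMap K ρ₀ + krausMap K ρ₁).trace = 2 := by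
    rw [trace_add, trace_krausMap hK, trace_krausMap hK, h₀t, h₁t]
    norm_num
  rw [Qmin_eq_sInf_image, Qmin_eq_sInf_image]
  refine csInf_le_csInf ?_ ⟨_, Set.mem_image_of_mem _ (half_smul_one_mem_qminTests htr)⟩ ?_
  · exact ⟨0, Set.forall_mem_image.2 fun Λ hΛ =>
      mul_nonneg zero_le_two (Complex.nonneg_iff.mp (hΛ.1.trace_mul_nonneg h₀)).1⟩
  · rintro _ ⟨Λ, hΛ, rfl⟩
    refine ⟨_, krausMapAdjoint_mapsTo_qminTests hK ρ₀ ρ₁ hΛ, ?_⟩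
    simp only [trace_krausMapAdjoint_mul]

/-- Data-processing inequality for `Q_min` (equivalently for `ξ_min = −log Q_min`):
for every quantum channel `E`, given in Kraus form `E(X) = ∑ i, K i * X * (K i)ᴴ`
with `∑ i, (K i)ᴴ * K i = 1`, one has `Q_min(E(ρ₀), E(ρ₁)) ≥ Q_min(ρ₀, ρ₁)`. -/
theorem Qmin_dpi {d m : ℕ} (ρ₀ ρ₁ : Matrix (Fin d) (Fin d) ℂ)
    (h₀ : ρ₀.PosSemidef) (h₀t : ρ₀.trace = 1)
    (h₁ : ρ₁.PosSemidef) (h₁t : ρ₁.trace = 1)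
    {ι : Type} [Fintype ι] (K : ι → Matrix (Fin m) (Fin d) ℂ)
    (hK : ∑ i, (K i)ᴴ * K i = 1) :
    Qmin ρ₀ ρ₁ ≤ Qmin (∑ i, K i * ρ₀ * (K i)ᴴ) (∑ i, K i * ρ₁ * (K i)ᴴ) :=
  Qmin_dpi_general ρ₀ ρ₁ h₀ h₀t h₁t K hK
end

section
/- For density matrices ρ₀, ρ₁ and any prior q ∈ [0,1], the minimum error probability satisfies p_err(q,ρ₀,ρ₁) ≤ Q_min(ρ₀,ρ₁)/2, where p_err(q,ρ₀,ρ₁) = min_{0≤Λ≤I} ( q Tr(Λρ₀) + (1−q) Tr((I−Λ)ρ₁) ) and Q_min(ρ₀,ρ₁) = 2·min{ Tr(Λρ₀) : 0 ≤ Λ ≤ I, Tr(Λ(ρ₀+ρ₁)) = 1 }. -/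
/-!
Every Λ feasible for `Q_min` has `Tr((I−Λ)ρ₁) = 1 − Tr(Λρ₁) = Tr(Λρ₀)`, so the error of the test Λ
is `Tr(Λρ₀)` whatever the prior; hence `p_err ≤ Tr(Λρ₀)` for each such Λ. For `sInf` to mean
the infimum, `Λ = I/2` shows the `Q_min` set is nonempty, and `Tr(AB) ≥ 0` for `A, B ≥ 0` bounds
the `p_err` set below by `0`.
-/

open Matrix
open scoped ComplexOrder

/-- Minimum error probability of binary discrimination with prior `(q, 1−q)`:
`p_err(q,ρ₀,ρ₁) = min_{0≤Λ≤I} ( q Tr(Λρ₀) + (1−q) Tr((I−Λ)ρ₁) )`. -/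
noncomputable def perr {d : ℕ} (q : ℝ) (ρ₀ ρ₁ : Matrix (Fin d) (Fin d) ℂ) : ℝ :=
  sInf {x : ℝ | ∃ Λ : Matrix (Fin d) (Fin d) ℂ, Λ.PosSemidef ∧ (1 - Λ).PosSemidef ∧
    x = q * ((Λ * ρ₀).trace).re + (1 - q) * (((1 - Λ) * ρ₁).trace).re}

section
variable {n 𝕜 : Type*} [Fintype n] [RCLike 𝕜]

theorem Matrix.PosSemidef.trace_mul_nonneg_s3 {A B : Matrix n n 𝕜}
    (hA : A.PosSemidef) (hB : B.PosSemidef) : 0 ≤ (A * B).trace := by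
  classical
  open scoped MatrixOrder in
  obtain ⟨S, hS, hSS⟩ : ∃ S : Matrix n n 𝕜, Sᴴ = S ∧ S * S = B :=
    ⟨CFC.sqrt B, (CFC.sqrt_nonneg B).posSemidef.isHermitian, CFC.sqrt_mul_sqrt_self B hB.nonneg⟩
  calc 0 ≤ (Sᴴ * A * S).trace := (hA.conjTranspose_mul_mul_same S).trace_nonneg
    _ = (A * B).trace := by rw [hS, ← hSS, Matrix.mul_assoc, trace_mul_comm, Matrix.mul_assoc]

theorem exists_posSemidef_le_one_trace_mul_eq_one [DecidableEq n] {ρ : Matrix n n 𝕜}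
    (hρ : ρ.trace = 2) :
    ∃ Λ : Matrix n n 𝕜, Λ.PosSemidef ∧ (1 - Λ).PosSemidef ∧ (Λ * ρ).trace = 1 := by
  have hhalf : ((2 : 𝕜)⁻¹ • 1 : Matrix n n 𝕜).PosSemidef :=
    PosSemidef.one.smul (by simp)
  refine ⟨(2 : 𝕜)⁻¹ • 1, hhalf, ?_, ?_⟩
  · convert hhalf using 1
    rw [sub_eq_iff_eq_add, ← add_smul]
    norm_num
  · simp [hρ]

end

theorem trace_one_sub_mul_eq_trace_mul {n R : Type*} [Fintype n] [DecidableEq n] [Ring R]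
    {Λ ρ₀ ρ₁ : Matrix n n R} (h₁t : ρ₁.trace = 1) (hΛ : (Λ * (ρ₀ + ρ₁)).trace = 1) :
    ((1 - Λ) * ρ₁).trace = (Λ * ρ₀).trace := by
  rw [Matrix.mul_add, trace_add] at hΛ
  rw [Matrix.sub_mul, Matrix.one_mul, trace_sub, h₁t, ← hΛ, add_sub_cancel_right]

theorem perr_le {d : ℕ} {ρ₀ ρ₁ Λ : Matrix (Fin d) (Fin d) ℂ}
    (h₀ : ρ₀.PosSemidef) (h₁ : ρ₁.PosSemidef) {q : ℝ} (hq0 : 0 ≤ q) (hq1 : q ≤ 1)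
    (hΛ : Λ.PosSemidef) (hΛ' : (1 - Λ).PosSemidef) :
    perr q ρ₀ ρ₁ ≤ q * ((Λ * ρ₀).trace).re + (1 - q) * (((1 - Λ) * ρ₁).trace).re := by
  refine csInf_le ⟨0, ?_⟩ ⟨Λ, hΛ, hΛ', rfl⟩
  rintro _ ⟨M, hM, hM', rfl⟩
  have hMρ₀ := Complex.nonneg_iff.mp (hM.trace_mul_nonneg_s3 h₀) |>.1
  have hMρ₁ := Complex.nonneg_iff.mp (hM'.trace_mul_nonneg_s3 h₁) |>.1
  have hq : 0 ≤ 1 - q := sub_nonneg.mpr hq1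
  positivity

/-- For every prior `q ∈ [0,1]`, `p_err(q,ρ₀,ρ₁) ≤ Q_min(ρ₀,ρ₁)/2`. -/
theorem perr_le_Qmin_half {d : ℕ} (ρ₀ ρ₁ : Matrix (Fin d) (Fin d) ℂ)
    (h₀ : ρ₀.PosSemidef) (h₀t : ρ₀.trace = 1)
    (h₁ : ρ₁.PosSemidef) (h₁t : ρ₁.trace = 1)
    (q : ℝ) (hq0 : 0 ≤ q) (hq1 : q ≤ 1) :
    perr q ρ₀ ρ₁ ≤ Qmin ρ₀ ρ₁ / 2 := by
  rw [le_div_iff₀ two_pos, Qmin]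
  have htrace : (ρ₀ + ρ₁).trace = 2 := by rw [trace_add, h₀t, h₁t]; norm_num
  obtain ⟨Λ₀, hΛ₀, hΛ₀', hΛ₀t⟩ := exists_posSemidef_le_one_trace_mul_eq_one htrace
  refine le_csInf ⟨_, Λ₀, hΛ₀, hΛ₀', hΛ₀t, rfl⟩ ?_
  rintro _ ⟨Λ, hΛ, hΛ', hΛt, rfl⟩
  have h := perr_le h₀ h₁ hq0 hq1 hΛ hΛ'
  rw [trace_one_sub_mul_eq_trace_mul h₁t hΛt] at h
  linarith
end

section
/- For density matrices ρ₀ and ρ₁, let Λ_min be a minimizer of Q_min(ρ₀,ρ₁) and set M = 1/Q_min(ρ₀,ρ₁); then the measure-and-prepare quantum channel E(ω) = Tr((I−Λ_min)ω)|0⟩⟨0| + Tr(Λ_min ω)|1⟩⟨1| satisfies E(ρ₀) = π_M and E(ρ₁) = σ_x π_M σ_x. -/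
open Matrix
open scoped ComplexOrder

/-- The golden-unit qubit state `π_M = (1−1/(2M))|0⟩⟨0| + (1/(2M))|1⟩⟨1|`. -/
noncomputable def piM (M : ℝ) : Matrix (Fin 2) (Fin 2) ℂ :=
  !![((1 - 1 / (2 * M) : ℝ) : ℂ), 0; 0, ((1 / (2 * M) : ℝ) : ℂ)]

/-- The Pauli-x matrix. -/
def sigmaX : Matrix (Fin 2) (Fin 2) ℂ := !![0, 1; 1, 0]

/-- The measure-and-prepare channel `E(ω) = Tr((I−Λ)ω)|0⟩⟨0| + Tr(Λω)|1⟩⟨1|`. -/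
noncomputable def measPrep {d : ℕ} (Λ ω : Matrix (Fin d) (Fin d) ℂ) :
    Matrix (Fin 2) (Fin 2) ℂ :=
  ((1 - Λ) * ω).trace • !![(1 : ℂ), 0; 0, 0] + (Λ * ω).trace • !![(0 : ℂ), 0; 0, 1]

/-- Exact one-shot SD-distillation under local channels: if `Λ_min` is a minimizer of
`Q_min(ρ₀,ρ₁) > 0`, the measure-and-prepare channel
`E(ω) = Tr((I−Λ_min)ω)|0⟩⟨0| + Tr(Λ_min ω)|1⟩⟨1|` satisfies `E(ρ₀) = π_M` and
`E(ρ₁) = σ_x π_M σ_x` for `M = 1/Q_min(ρ₀,ρ₁)`. -/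
theorem distill_exact {d : ℕ} (ρ₀ ρ₁ Λ : Matrix (Fin d) (Fin d) ℂ)
    (h₀ : ρ₀.PosSemidef) (h₀t : ρ₀.trace = 1)
    (h₁ : ρ₁.PosSemidef) (h₁t : ρ₁.trace = 1)
    (hΛ : Λ.PosSemidef) (hΛ' : (1 - Λ).PosSemidef)
    (hconstraint : (Λ * (ρ₀ + ρ₁)).trace = 1)
    (hmin : 2 * ((Λ * ρ₀).trace).re = Qmin ρ₀ ρ₁)
    (hpos : 0 < Qmin ρ₀ ρ₁) :
    measPrep Λ ρ₀ = piM (1 / Qmin ρ₀ ρ₁) ∧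
    measPrep Λ ρ₁ = sigmaX * piM (1 / Qmin ρ₀ ρ₁) * sigmaX := by

  set Q := Qmin ρ₀ ρ₁ with hQ
  have hQne : Q ≠ 0 := ne_of_gt hpos
  -- the trace Tr(Λρ₀) is real
  have hreal : (Λ * ρ₀).trace = (((Λ * ρ₀).trace).re : ℂ) := by
    have h1 : (Λ * ρ₀)ᴴ.trace = star (Λ * ρ₀).trace := Matrix.trace_conjTranspose _
    rw [Matrix.conjTranspose_mul, hΛ.1.eq, h₀.1.eq, Matrix.trace_mul_comm] at h1
    have := Complex.conj_eq_iff_re.mp h1.symm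
    exact this.symm
  set t : ℂ := (Λ * ρ₀).trace with htdef
  have htQ : t = ((Q / 2 : ℝ) : ℂ) := by
    rw [hreal]
    norm_cast
    rw [← hmin]; ring
  have hsum : (Λ * ρ₁).trace = 1 - t := by
    have : (Λ * (ρ₀ + ρ₁)).trace = t + (Λ * ρ₁).trace := by
      rw [Matrix.mul_add, Matrix.trace_add]
    rw [this] at hconstraint
    linear_combination hconstraint
  have hsub : ∀ ρ : Matrix (Fin d) (Fin d) ℂ, ((1 - Λ) * ρ).trace = ρ.trace - (Λ * ρ).trace := by
    intro ρ
    rw [Matrix.sub_mul, Matrix.one_mul, Matrix.trace_sub]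
  have hM : 1 / (2 * (1 / Q)) = Q / 2 := by
    field_simp
  have hpi : piM (1 / Q) = !![((1 - Q / 2 : ℝ) : ℂ), 0; 0, ((Q / 2 : ℝ) : ℂ)] := by
    rw [piM, hM]
  constructor
  · rw [measPrep, hsub, h₀t, hpi, ← htdef, htQ]
    ext i j
    fin_cases i <;> fin_cases j <;>
      simp [Matrix.add_apply, Matrix.smul_apply] <;> push_cast <;> ring
  · rw [measPrep, hsub, h₁t, hsum, hpi, htQ, sigmaX]
    ext i j
    fin_cases i <;> fin_cases j <;>
      simp [Matrix.add_apply, Matrix.smul_apply, Matrix.mul_apply, Fin.sum_univ_two] <;>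
      push_cast <;> ring
end

section
/- The key inequalities in the smoothing construction: let ω₀, ω₁ be positive semi-definite operators with Tr(ω₀) = Tr(ω₁), let λ ≥ 1, ε' = Tr((ω₀−ω₁)₊)/λ, and set ω̃₀ = (ω₀ + (1/λ)(ω₁−ω₀)₊)/(1+ε'), ω̃₁ = (ω₁ + (1/λ)(ω₀−ω₁)₊)/(1+ε'). Then (λ+1)·ω̃₀ ≥ ω̃₁ and (λ+1)·ω̃₁ ≥ ω̃₀ in the Loewner order. -/
/-!
Since `ω₀ - ω₁ = (ω₀ - ω₁)₊ - (ω₁ - ω₀)₊`, the difference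
`(λ + 1)(ω₀ + λ⁻¹(ω₁ - ω₀)₊) - (ω₁ + λ⁻¹(ω₀ - ω₁)₊)` equals
`λω₀ + λ⁻¹(ω₁ - ω₀)₊ + (1 - λ⁻¹)(ω₀ - ω₁)₊`, a combination of positive operators with
nonnegative coefficients when `λ ≥ 1`; the common normalisation `(1 + ε')⁻¹` is positive.
The second inequality is the first with `ω₀` and `ω₁` exchanged.
-/

open Matrix
open scoped ComplexOrder

/-- The positive part `A₊` of a Hermitian matrix `A`, via its spectral decomposition. -/
noncomputable def posPart {d : ℕ} {A : Matrix (Fin d) (Fin d) ℂ} (hA : A.IsHermitian) :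
    Matrix (Fin d) (Fin d) ℂ :=
  (hA.eigenvectorUnitary : Matrix (Fin d) (Fin d) ℂ) *
    Matrix.diagonal (fun i => ((max (hA.eigenvalues i) 0 : ℝ) : ℂ)) *
    star (hA.eigenvectorUnitary : Matrix (Fin d) (Fin d) ℂ)

section OrderedModule

variable {M : Type*} [AddCommGroup M] [PartialOrder M] [IsOrderedAddMonoid M] [Module ℝ M]
  [PosSMulMono ℝ M]

lemma add_inv_smul_le_smul_add_inv_smul {a b p q : M} (ha : 0 ≤ a) (hp : 0 ≤ p) (hq : 0 ≤ q)
    (hab : a - b = p - q) {lam : ℝ} (hlam : 1 ≤ lam) :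
    b + lam⁻¹ • p ≤ (lam + 1) • (a + lam⁻¹ • q) := by
  have hlam₀ : 0 < lam := zero_lt_one.trans_le hlam
  obtain rfl : b = a - p + q := by rw [sub_add, ← hab, sub_sub_cancel]
  rw [← sub_nonneg]
  have hdiff : (lam + 1) • (a + lam⁻¹ • q) - (a - p + q + lam⁻¹ • p)
      = lam • a + lam⁻¹ • q + (1 - lam⁻¹) • p := by
    match_scalars <;> field_simp <;> ring
  rw [hdiff]
  have hlam_inv : 0 ≤ 1 - lam⁻¹ := sub_nonneg.2 (inv_le_one_of_one_le₀ hlam)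
  exact add_nonneg (add_nonneg (smul_nonneg hlam₀.le ha) (smul_nonneg (by positivity) hq))
    (smul_nonneg hlam_inv hp)

end OrderedModule

open scoped MatrixOrder

section PosPart

variable {d : ℕ}

lemma posPart_eq_cfc_posPart {A : Matrix (Fin d) (Fin d) ℂ} (hA : A.IsHermitian) :
    posPart hA = A⁺ := by
  rw [CFC.posPart_def, cfcₙ_eq_cfc, hA.cfc_eq]
  rfl

lemma posPart_posSemidef {A : Matrix (Fin d) (Fin d) ℂ} (hA : A.IsHermitian) :
    (posPart hA).PosSemidef :=
  (posPart_eq_cfc_posPart hA ▸ CFC.posPart_nonneg A).posSemidef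

lemma posPart_sub_sub_posPart_sub {A B : Matrix (Fin d) (Fin d) ℂ} (hAB : (A - B).IsHermitian)
    (hBA : (B - A).IsHermitian) : posPart hAB - posPart hBA = A - B := by
  rw [posPart_eq_cfc_posPart, posPart_eq_cfc_posPart, ← neg_sub A B, CFC.posPart_neg,
    CFC.posPart_sub_negPart _ hAB]

end PosPart

theorem smoothing_key_inequalities_general {d : ℕ} (ω₀ ω₁ : Matrix (Fin d) (Fin d) ℂ)
    (h₀ : ω₀.PosSemidef) (h₁ : ω₁.PosSemidef)
    (lam : ℝ) (hlam : 1 ≤ lam) :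
    ((lam + 1) •
        ((1 + ((posPart (h₀.isHermitian.sub h₁.isHermitian)).trace.re / lam))⁻¹ •
          (ω₀ + lam⁻¹ • posPart (h₁.isHermitian.sub h₀.isHermitian))) -
      (1 + ((posPart (h₀.isHermitian.sub h₁.isHermitian)).trace.re / lam))⁻¹ •
        (ω₁ + lam⁻¹ • posPart (h₀.isHermitian.sub h₁.isHermitian))).PosSemidef ∧
    ((lam + 1) •
        ((1 + ((posPart (h₀.isHermitian.sub h₁.isHermitian)).trace.re / lam))⁻¹ •
          (ω₁ + lam⁻¹ • posPart (h₀.isHermitian.sub h₁.isHermitian))) -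
      (1 + ((posPart (h₀.isHermitian.sub h₁.isHermitian)).trace.re / lam))⁻¹ •
        (ω₀ + lam⁻¹ • posPart (h₁.isHermitian.sub h₀.isHermitian))).PosSemidef := by
  set p := posPart (h₀.isHermitian.sub h₁.isHermitian)
  set q := posPart (h₁.isHermitian.sub h₀.isHermitian)
  set c := (1 + p.trace.re / lam)⁻¹
  have hc : 0 ≤ c := by
    have : 0 ≤ p.trace.re := (Complex.nonneg_iff.1 (posPart_posSemidef _).trace_nonneg).1
    have : 0 < lam := zero_lt_one.trans_le hlam
    positivity
  have hp : 0 ≤ p := (posPart_posSemidef _).nonneg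
  have hq : 0 ≤ q := (posPart_posSemidef _).nonneg
  have hω₀ := add_inv_smul_le_smul_add_inv_smul h₀.nonneg hp hq
    (posPart_sub_sub_posPart_sub _ _).symm hlam
  have hω₁ := add_inv_smul_le_smul_add_inv_smul h₁.nonneg hq hp
    (posPart_sub_sub_posPart_sub _ _).symm hlam
  rw [smul_comm (lam + 1) c, smul_comm (lam + 1) c]
  exact ⟨le_iff.mp (smul_le_smul_of_nonneg_left hω₀ hc),
    le_iff.mp (smul_le_smul_of_nonneg_left hω₁ hc)⟩

/-- Key inequalities in the smoothing construction: with `λ ≥ 1`,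
`ε' = Tr((ω₀−ω₁)₊)/λ`, `ω̃₀ = (ω₀ + (1/λ)(ω₁−ω₀)₊)/(1+ε')` and
`ω̃₁ = (ω₁ + (1/λ)(ω₀−ω₁)₊)/(1+ε')`, one has `(λ+1)ω̃₀ ≥ ω̃₁` and `(λ+1)ω̃₁ ≥ ω̃₀`
in the Loewner order. -/
theorem smoothing_key_inequalities {d : ℕ} (ω₀ ω₁ : Matrix (Fin d) (Fin d) ℂ)
    (h₀ : ω₀.PosSemidef) (h₁ : ω₁.PosSemidef) (htr : ω₀.trace = ω₁.trace)
    (lam : ℝ) (hlam : 1 ≤ lam) :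
    ((lam + 1) •
        ((1 + ((posPart (h₀.isHermitian.sub h₁.isHermitian)).trace.re / lam))⁻¹ •
          (ω₀ + lam⁻¹ • posPart (h₁.isHermitian.sub h₀.isHermitian))) -
      (1 + ((posPart (h₀.isHermitian.sub h₁.isHermitian)).trace.re / lam))⁻¹ •
        (ω₁ + lam⁻¹ • posPart (h₀.isHermitian.sub h₁.isHermitian))).PosSemidef ∧
    ((lam + 1) •
        ((1 + ((posPart (h₀.isHermitian.sub h₁.isHermitian)).trace.re / lam))⁻¹ •
          (ω₁ + lam⁻¹ • posPart (h₀.isHermitian.sub h₁.isHermitian))) -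
      (1 + ((posPart (h₀.isHermitian.sub h₁.isHermitian)).trace.re / lam))⁻¹ •
        (ω₀ + lam⁻¹ • posPart (h₁.isHermitian.sub h₀.isHermitian))).PosSemidef :=
  smoothing_key_inequalities_general ω₀ ω₁ h₀ h₁ lam hlam
end

section
/- Any maximally distinguishable pair can be converted to any target pair by a CDS map: suppose ω₀, ω₁ are density matrices with orthogonal supports (there exists 0 ≤ Λ ≤ I with Tr(Λω₀) = 1 and Tr(Λω₁) = 0), and let q ∈ [0,1] and density matrices σ₀, σ₁ be arbitrary. Then the CDS map N = id_X ⊗ E₀ + F_X ⊗ E₁ with E₀(·) = q Tr(Λ·)σ₀ + (1−q)Tr((I−Λ)·)σ₁ and E₁(·) = q Tr((I−Λ)·)σ₀ + (1−q)Tr(Λ·)σ₁ maps the c-q state p|0⟩⟨0|⊗ω₀ + (1−p)|1⟩⟨1|⊗ω₁ to q|0⟩⟨0|⊗σ₀ + (1−q)|1⟩⟨1|⊗σ₁, for any p ∈ [0,1]. -/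
open Matrix
open scoped ComplexOrder

/-- The measure-and-prepare quantum operation
`E(ω) = a·Tr(Λω)·σ + b·Tr((I−Λ)ω)·τ`. -/
noncomputable def measPrepOp {d m : ℕ} (a b : ℝ) (Λ : Matrix (Fin d) (Fin d) ℂ)
    (σ τ : Matrix (Fin m) (Fin m) ℂ) (ω : Matrix (Fin d) (Fin d) ℂ) :
    Matrix (Fin m) (Fin m) ℂ :=
  a • ((Λ * ω).trace • σ) + b • (((1 - Λ) * ω).trace • τ)

/-- Any maximally distinguishable pair can be converted to any target pair by a CDS map:
if `ω₀, ω₁` have orthogonal supports, witnessed by `0 ≤ Λ ≤ I` with `Tr(Λω₀) = 1` and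
`Tr(Λω₁) = 0`, then the CDS map `N = id_X ⊗ E₀ + F_X ⊗ E₁`, with
`E₀(·) = q Tr(Λ·)σ₀ + (1−q)Tr((I−Λ)·)σ₁` and `E₁(·) = q Tr((I−Λ)·)σ₀ + (1−q)Tr(Λ·)σ₁`,
maps `p|0⟩⟨0|⊗ω₀ + (1−p)|1⟩⟨1|⊗ω₁` to `q|0⟩⟨0|⊗σ₀ + (1−q)|1⟩⟨1|⊗σ₁`; on blocks this
reads `p E₀(ω₀) + (1−p) E₁(ω₁) = q σ₀` and `p E₁(ω₀) + (1−p) E₀(ω₁) = (1−q) σ₁`. -/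
theorem infinite_resource_to_any {d m : ℕ}
    (ω₀ ω₁ : Matrix (Fin d) (Fin d) ℂ)
    (hω₀ : ω₀.PosSemidef) (hω₀t : ω₀.trace = 1)
    (hω₁ : ω₁.PosSemidef) (hω₁t : ω₁.trace = 1)
    (Λ : Matrix (Fin d) (Fin d) ℂ)
    (hΛ : Λ.PosSemidef) (hΛ' : (1 - Λ).PosSemidef)
    (hΛ0 : (Λ * ω₀).trace = 1) (hΛ1 : (Λ * ω₁).trace = 0)
    (q : ℝ) (hq0 : 0 ≤ q) (hq1 : q ≤ 1)
    (σ₀ σ₁ : Matrix (Fin m) (Fin m) ℂ)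
    (hσ₀ : σ₀.PosSemidef) (hσ₀t : σ₀.trace = 1)
    (hσ₁ : σ₁.PosSemidef) (hσ₁t : σ₁.trace = 1)
    (p : ℝ) (hp0 : 0 ≤ p) (hp1 : p ≤ 1) :
    p • measPrepOp q (1 - q) Λ σ₀ σ₁ ω₀ +
        (1 - p) • measPrepOp q (1 - q) (1 - Λ) σ₀ σ₁ ω₁ = q • σ₀ ∧
    p • measPrepOp q (1 - q) (1 - Λ) σ₀ σ₁ ω₀ +
        (1 - p) • measPrepOp q (1 - q) Λ σ₀ σ₁ ω₁ = (1 - q) • σ₁ := by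

  have h0' : ((1 - Λ) * ω₀).trace = 0 := by
    rw [sub_mul, one_mul, trace_sub, hω₀t, hΛ0, sub_self]
  have h1' : ((1 - Λ) * ω₁).trace = 1 := by
    rw [sub_mul, one_mul, trace_sub, hω₁t, hΛ1, sub_zero]
  have hinv : (1 : Matrix (Fin d) (Fin d) ℂ) - (1 - Λ) = Λ := sub_sub_cancel 1 Λ
  constructor <;>
  · simp only [measPrepOp, hinv, hΛ0, hΛ1, h0', h1', one_smul, zero_smul, smul_zero,
      add_zero, zero_add, smul_smul, ← add_smul]
    congr 1
    push_cast
    ring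
end
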